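/- Every element A of the special unitary group SU(2) (2×2 complex unitary matrices of determinant 1) can be written in cylindrical coordinates: there exist φ ∈ [0, π], θ ∈ [0, 2π) and z ∈ (−2π, 2π] such that A = exp(φ•(cos θ • X + sin θ • Y)) · exp(z•Z). -/

import Mathlib

/-!
Both `2 • (cos θ • X + sin θ • Y)` and `2 • Z` square to `-1`, so Euler's formula
`exp (t • J) = cos t + sin t • J` computes their exponentials, and the product
`exp (φ • (cos θ • X + sin θ • Y)) * exp (z • Z)` is the matrix `!![u, v; -v̄, ū]` with
`u = cos (φ / 2) e^{iz/2}` and `v = sin (φ / 2) e^{i(θ - z/2)}`. Every element of `SU(2)` is of the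
form `!![a, b; -b̄, ā]` with `|a|² + |b|² = 1`, and the polar forms of `a` and `b` provide `φ`, `z`
and `θ`.
-/

open scoped Matrix

/-- Halved Pauli matrix `X` generating `su(2)`. -/
noncomputable def X : Matrix (Fin 2) (Fin 2) ℂ := (1 / 2 : ℂ) • !![0, 1; -1, 0]

/-- Halved Pauli matrix `Y` generating `su(2)`. -/
noncomputable def Y : Matrix (Fin 2) (Fin 2) ℂ :=
  (1 / 2 : ℂ) • !![0, Complex.I; Complex.I, 0]

/-- Halved Pauli matrix `Z` generating `su(2)`. -/
noncomputable def Z : Matrix (Fin 2) (Fin 2) ℂ :=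
  (1 / 2 : ℂ) • !![Complex.I, 0; 0, -Complex.I]

theorem NormedSpace.exp_smul_of_mul_self_eq_neg_one {𝔸 : Type*} [Ring 𝔸] [Algebra ℝ 𝔸]
    [TopologicalSpace 𝔸] [IsTopologicalRing 𝔸] [ContinuousSMul ℝ 𝔸] [T2Space 𝔸]
    {J : 𝔸} (hJ : J * J = -1) (t : ℝ) :
    exp (t • J) = Real.cos t • (1 : 𝔸) + Real.sin t • J := by
  have hJ_pow_even (n : ℕ) : J ^ (2 * n) = (-1 : ℝ) ^ n • (1 : 𝔸) := by
    rw [pow_mul, sq, hJ, ← neg_one_smul ℝ (1 : 𝔸), smul_pow, one_pow]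
  rw [exp_eq_tsum ℝ]
  refine HasSum.tsum_eq (HasSum.even_add_odd ?_ ?_)
  · convert (Real.hasSum_cos t).smul_const (1 : 𝔸) using 2 with n
    rw [smul_pow, hJ_pow_even, smul_smul, smul_smul]
    ring_nf
  · convert (Real.hasSum_sin t).smul_const J using 2 with n
    rw [smul_pow, pow_succ J, hJ_pow_even, smul_mul_assoc, one_mul, smul_smul, smul_smul]
    ring_nf

theorem Matrix.eq_of_mem_specialUnitaryGroup_fin_two {α : Type*} [CommRing α] [StarRing α]
    {A : Matrix (Fin 2) (Fin 2) α} (hA : A ∈ specialUnitaryGroup (Fin 2) α) :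
    A = !![A 0 0, A 0 1; -star (A 0 1), star (A 0 0)] ∧
      A 0 0 * star (A 0 0) + A 0 1 * star (A 0 1) = 1 := by
  obtain ⟨hU, hdet⟩ := mem_specialUnitaryGroup_iff.mp hA
  have hstar : star A = adjugate A := by
    rw [← inv_eq_right_inv (mem_unitaryGroup_iff.mp hU), inv_def, hdet, Ring.inverse_one,
      one_smul]
  rw [adjugate_fin_two, ← Matrix.ext_iff] at hstar
  have h01 := hstar 0 1
  have h00 := hstar 0 0
  simp only [star_apply, of_apply, cons_val', cons_val_one, cons_val_fin_one, cons_val_zero]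
    at h01 h00
  have h10 : A 1 0 = -star (A 0 1) := by rw [← star_neg, ← h01, star_star]
  refine ⟨?_, ?_⟩
  · rw [h00, ← h10]
    exact eta_fin_two A
  · rw [det_fin_two, h10, ← h00] at hdet
    linear_combination hdet

open Complex

theorem two_smul_cos_smul_X_add_sin_smul_Y (θ : ℝ) :
    (2 : ℝ) • (Real.cos θ • X + Real.sin θ • Y) = !![0, exp (θ * I); -exp (-(θ * I)), 0] := by
  rw [exp_mul_I, ← neg_mul, exp_mul_I, cos_neg, sin_neg]
  ext i j
  fin_cases i <;> fin_cases j <;> simp [X, Y] <;> ring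

theorem two_smul_Z : (2 : ℝ) • Z = !![I, 0; 0, -I] := by
  ext i j
  fin_cases i <;> fin_cases j <;> simp [Z]

theorem exp_smul_cos_smul_X_add_sin_smul_Y (φ θ : ℝ) :
    NormedSpace.exp (φ • (Real.cos θ • X + Real.sin θ • Y)) =
      !![(Real.cos (φ / 2) : ℂ), Real.sin (φ / 2) * exp (θ * I);
        -Real.sin (φ / 2) * exp (-(θ * I)), Real.cos (φ / 2)] := by
  have hJ : !![0, exp (θ * I); -exp (-(θ * I)), 0] * !![0, exp (θ * I); -exp (-(θ * I)), 0] =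
      (-1 : Matrix (Fin 2) (Fin 2) ℂ) := by
    ext i j
    fin_cases i <;> fin_cases j <;> simp [← exp_add]
  rw [show φ • (Real.cos θ • X + Real.sin θ • Y) =
      (φ / 2) • (2 : ℝ) • (Real.cos θ • X + Real.sin θ • Y) by rw [smul_smul]; norm_num,
    two_smul_cos_smul_X_add_sin_smul_Y, NormedSpace.exp_smul_of_mul_self_eq_neg_one hJ]
  ext i j
  fin_cases i <;> fin_cases j <;> simp

theorem exp_smul_Z (z : ℝ) :
    NormedSpace.exp (z • Z) = !![exp (z / 2 * I), 0; 0, exp (-(z / 2 * I))] := by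
  have hJ : !![I, 0; 0, -I] * !![I, 0; 0, -I] = (-1 : Matrix (Fin 2) (Fin 2) ℂ) := by
    ext i j
    fin_cases i <;> fin_cases j <;> simp
  rw [show z • Z = (z / 2) • (2 : ℝ) • Z by rw [smul_smul]; norm_num, two_smul_Z,
    NormedSpace.exp_smul_of_mul_self_eq_neg_one hJ, ← neg_mul, exp_mul_I, exp_mul_I]
  ext i j
  fin_cases i <;> fin_cases j <;> simp

theorem exp_smul_cos_smul_X_add_sin_smul_Y_mul_exp_smul_Z (φ θ z : ℝ) :
    NormedSpace.exp (φ • (Real.cos θ • X + Real.sin θ • Y)) * NormedSpace.exp (z • Z) =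
      !![Real.cos (φ / 2) * exp (z / 2 * I), Real.sin (φ / 2) * exp ((θ - z / 2) * I);
        -star (Real.sin (φ / 2) * exp ((θ - z / 2) * I)),
        star (Real.cos (φ / 2) * exp (z / 2 * I))] := by
  rw [exp_smul_cos_smul_X_add_sin_smul_Y, exp_smul_Z]
  ext i j
  fin_cases i <;> fin_cases j <;>
    simp [← exp_conj, mul_assoc, ← exp_add, map_ofNat, -ofReal_sin, -ofReal_cos] <;>
    exact Or.inl (by ring_nf)

theorem exists_cylindrical_of_norm_sq_add_norm_sq_eq_one {a b : ℂ}
    (hab : ‖a‖ ^ 2 + ‖b‖ ^ 2 = 1) :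
    ∃ φ ∈ Set.Icc (0 : ℝ) Real.pi, ∃ θ ∈ Set.Ico (0 : ℝ) (2 * Real.pi),
      ∃ z ∈ Set.Ioc (-(2 * Real.pi)) (2 * Real.pi),
        Real.cos (φ / 2) * exp (z / 2 * I) = a ∧ Real.sin (φ / 2) * exp ((θ - z / 2) * I) = b := by
  have ha : ‖a‖ ≤ 1 := by nlinarith [norm_nonneg a, norm_nonneg b]
  set θ := toIcoMod Real.two_pi_pos 0 (arg b + arg a)
  refine ⟨2 * Real.arccos ‖a‖, ⟨mul_nonneg zero_le_two (Real.arccos_nonneg _), ?_⟩,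
    θ, toIcoMod_mem_Ico' _ _, 2 * arg a, ⟨?_, ?_⟩, ?_, ?_⟩
  · linarith [Real.arccos_le_pi_div_two.mpr (norm_nonneg a)]
  · linarith [neg_pi_lt_arg a]
  · linarith [arg_le_pi a]
  · rw [mul_div_cancel_left₀ _ two_ne_zero, Real.cos_arccos (by linarith [norm_nonneg a]) ha]
    push_cast
    rw [mul_div_cancel_left₀ _ two_ne_zero, norm_mul_exp_arg_mul_I]
  · have hθ : (θ : ℂ) - ↑(2 * arg a) / 2 =
        arg b - toIcoDiv Real.two_pi_pos 0 (arg b + arg a) • (2 * Real.pi) := by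
      simp only [θ, toIcoMod]
      push_cast
      ring
    rw [mul_div_cancel_left₀ _ two_ne_zero, Real.sin_arccos, hθ, exp_mul_I_periodic.sub_zsmul_eq,
      show 1 - ‖a‖ ^ 2 = ‖b‖ ^ 2 by linarith, Real.sqrt_sq (norm_nonneg b), norm_mul_exp_arg_mul_I]

theorem su2_cylindrical_coordinates (A : Matrix.specialUnitaryGroup (Fin 2) ℂ) :
    ∃ φ ∈ Set.Icc (0 : ℝ) Real.pi, ∃ θ ∈ Set.Ico (0 : ℝ) (2 * Real.pi),
      ∃ z ∈ Set.Ioc (-(2 * Real.pi)) (2 * Real.pi),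
        (A : Matrix (Fin 2) (Fin 2) ℂ) =
          NormedSpace.exp (φ • (Real.cos θ • X + Real.sin θ • Y)) *
            NormedSpace.exp (z • Z) := by
  obtain ⟨hA, hnorm⟩ := Matrix.eq_of_mem_specialUnitaryGroup_fin_two A.2
  rw [RCLike.star_def, mul_conj', mul_conj'] at hnorm
  obtain ⟨φ, hφ, θ, hθ, z, hz, hu, hv⟩ :=
    exists_cylindrical_of_norm_sq_add_norm_sq_eq_one (by exact_mod_cast hnorm)
  refine ⟨φ, hφ, θ, hθ, z, hz, ?_⟩
  rw [exp_smul_cos_smul_X_add_sin_smul_Y_mul_exp_smul_Z, hu, hv]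
  exact hA
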